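/- Let p be prime and R the set of nonzero quadratic residues modulo p with |R| > 2. Assuming the Chen–Yan result that any decomposition R = U + V with |U|, |V| ≥ 2 satisfies min(|U|,|V|) ≥ 5, together with the direct-sum property (any decomposition of R into n sets of size ≥ 2 satisfies |R| = product of sizes), conclude that R is not a generalized arithmetic progression. -/
import Mathlib


open Finset Pointwise

/-- `S` is a generalized arithmetic progression in `ZMod p`. -/
def IsGAP (p : ℕ) (S : Finset (ZMod p)) : Prop :=
  ∃ (n : ℕ) (_ : 0 < n) (a : ZMod p) (d : Fin n → ZMod p) (L : Fin n → ℕ),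
    (∀ i, d i ≠ 0) ∧ (∀ i, 2 ≤ L i) ∧
    S = {a} + ∑ i, (Finset.range (L i)).image (fun x : ℕ => (x : ZMod p) * d i)

lemma interval_split (p : ℕ) (d : ZMod p) (L : ℕ) (hL : 2 ≤ L) :
    (Finset.range L).image (fun x : ℕ => (x : ZMod p) * d) =
      ({0, d} : Finset (ZMod p)) +
        (Finset.range (L - 1)).image (fun x : ℕ => (x : ZMod p) * d) := by
  obtain ⟨K, rfl⟩ : ∃ K, L = K + 2 := ⟨L - 2, by omega⟩
  ext z
  simp only [Finset.mem_add, Finset.mem_image, Finset.mem_range, Finset.mem_insert,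
    Finset.mem_singleton]
  constructor
  · rintro ⟨x, hx, rfl⟩
    rcases Nat.lt_or_ge x (K + 1) with h | h
    · exact ⟨0, Or.inl rfl, _, ⟨x, by omega, rfl⟩, by simp⟩
    · have hx' : x = K + 1 := by omega
      subst hx'
      refine ⟨d, Or.inr rfl, _, ⟨K, by omega, rfl⟩, ?_⟩
      push_cast
      ring
  · rintro ⟨a, ha, b, ⟨x, hx, rfl⟩, rfl⟩
    rcases ha with rfl | rfl
    · exact ⟨x, by omega, by simp⟩
    · exact ⟨x + 1, by omega, by push_cast; ring⟩

theorem stmt14 (p : ℕ) [Fact p.Prime]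
    (R : Finset (ZMod p))
    (hR : R = Finset.image (fun y : (ZMod p)ˣ => ((y : ZMod p)) ^ 2) Finset.univ)
    (hR2 : 2 < R.card)
    (hCY : ∀ U V : Finset (ZMod p), 2 ≤ U.card → 2 ≤ V.card → R = U + V →
      5 ≤ min U.card V.card)
    (hdirect : ∀ (n : ℕ) (S : Fin n → Finset (ZMod p)), (∀ i, 2 ≤ (S i).card) →
      R = ∑ i, S i → R.card = ∏ i, (S i).card) :
    ¬ IsGAP p R := by
  rintro ⟨n, hn, a, d, L, hd, hL, hS⟩
  obtain ⟨m, rfl⟩ : ∃ m, n = m + 1 := ⟨n - 1, by omega⟩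
  set P : Fin (m + 1) → Finset (ZMod p) :=
    fun i => (Finset.range (L i)).image (fun x : ℕ => (x : ZMod p) * d i) with hP
  set Q : Finset (ZMod p) :=
    (Finset.range (L 0 - 1)).image (fun x : ℕ => (x : ZMod p) * d 0) with hQ
  have hsplit : P 0 = ({0, d 0} : Finset (ZMod p)) + Q :=
    interval_split p (d 0) (L 0) (hL 0)
  have hsum : (∑ i, P i) = P 0 + ∑ i : Fin m, P i.succ := Fin.sum_univ_succ P
  set U : Finset (ZMod p) := {a, a + d 0} with hU
  set V : Finset (ZMod p) := Q + ∑ i : Fin m, P i.succ with hV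
  have hUV : R = U + V := by
    rw [hS, hsum, hsplit]
    have h1 : ({a} : Finset (ZMod p)) + ({0, d 0} : Finset (ZMod p)) = U := by
      rw [hU]
      ext z
      simp only [Finset.mem_add, Finset.mem_singleton, Finset.mem_insert]
      constructor
      · rintro ⟨x, rfl, y, hy, rfl⟩
        rcases hy with rfl | rfl
        · left; exact add_zero x
        · right; rfl
      · rintro (h | h)
        · exact ⟨a, rfl, 0, Or.inl rfl, by rw [h, add_zero]⟩
        · exact ⟨a, rfl, d 0, Or.inr rfl, h.symm⟩
    calc ({a} : Finset (ZMod p)) + (({0, d 0} : Finset (ZMod p)) + Q + ∑ i : Fin m, P i.succ)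
        = ({a} + ({0, d 0} : Finset (ZMod p))) + (Q + ∑ i : Fin m, P i.succ) := by abel
      _ = U + V := by rw [h1, hV]
  have hUcard : U.card = 2 := by
    rw [hU, Finset.card_insert_of_notMem (by simp [hd 0]), Finset.card_singleton]
  rcases Nat.lt_or_ge V.card 2 with h | h
  · have : R.card ≤ U.card * V.card := by
      rw [hUV]; exact Finset.card_add_le
    have : R.card ≤ 2 := by
      calc R.card ≤ U.card * V.card := this
        _ ≤ 2 * 1 := by rw [hUcard]; exact Nat.mul_le_mul_left 2 (by omega)
        _ = 2 := by ring
    omega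
  · have h5 := hCY U V (by omega) h hUV
    rw [hUcard] at h5
    omega
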